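/- arXiv:2204.13416 — 2 statements merged into one kernel-verified Lean document; each statement's English description precedes it below -/
import Mathlib

section
/- Let Y be a complex Banach space, let Z be a bounded skew-hermitian operator on Y which has a bounded ℬ-calculus, and let K be a compact subset of iℝ with σ(Z) contained in the interior of K relative to iℝ. Let Ψ be a bounded C(K)-calculus for Z and let Φ₀ be a bounded C₀(iℝ)-calculus for Z. Then for every f ∈ C₀(iℝ), Ψ(f|_K) = Φ₀(f). -/
open Complex MeasureTheory Filter Topology
open scoped ENNReal NNReal Classical

noncomputable section

variable {X : Type*} [NormedAddCommGroup X] [NormedSpace ℂ X]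

/-- Membership in the analytic Besov algebra `ℬ`.  We represent elements of `ℬ` as
functions on `ℂ` which are holomorphic on the open right half-plane `ℂ₊`, together with
their (bounded, continuous) extension to the closed right half-plane;  values off the
closed half-plane are irrelevant. -/
def MemB (f : ℂ → ℂ) : Prop :=
  DifferentiableOn ℂ f {z : ℂ | 0 < z.re} ∧
  ContinuousOn f {z : ℂ | 0 ≤ z.re} ∧
  (∃ M : ℝ, ∀ z : ℂ, 0 ≤ z.re → ‖f z‖ ≤ M) ∧
  (∫⁻ α in Set.Ioi (0:ℝ), ⨆ β : ℝ, (‖deriv f ((α : ℂ) + (β : ℂ) * Complex.I)‖₊ : ℝ≥0∞)) < ⊤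

/-- The norm `‖f‖_ℬ = ‖f‖_{ℬ₀} + ‖f‖_∞` on the Besov algebra `ℬ`. -/
def bNorm (f : ℂ → ℂ) : ℝ :=
  (∫⁻ α in Set.Ioi (0:ℝ), ⨆ β : ℝ, (‖deriv f ((α : ℂ) + (β : ℂ) * Complex.I)‖₊ : ℝ≥0∞)).toReal
    + ⨆ z : {z : ℂ // 0 < z.re}, ‖f z‖

/-- A bounded operator `Z` is skew-hermitian if `e^{tZ}` is isometric for all real `t`. -/
def IsSkewHermitianBdd (Z : X →L[ℂ] X) : Prop :=
  ∀ (t : ℝ) (y : X), ‖NormedSpace.exp (t • Z) y‖ = ‖y‖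

/-- `Φ` is a bounded `ℬ`-calculus for the bounded operator `Z` : a bounded algebra
homomorphism `ℬ → L(X)` sending each `r_λ = (λ + ·)⁻¹`, `Re λ > 0`, to `(λ + Z)⁻¹`. -/
def IsBCalculusBdd (Z : X →L[ℂ] X) (Φ : (ℂ → ℂ) → X →L[ℂ] X) : Prop :=
  (∀ f g, MemB f → MemB g → Φ (f + g) = Φ f + Φ g) ∧
  (∀ (c : ℂ) (f), MemB f → Φ (c • f) = c • Φ f) ∧
  (∀ f g, MemB f → MemB g → Φ (f * g) = Φ f * Φ g) ∧
  (∃ C : ℝ, ∀ f, MemB f → ‖Φ f‖ ≤ C * bNorm f) ∧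
  (∀ l : ℂ, 0 < l.re →
      Φ (fun z => (l + z)⁻¹) * (l • (1 : X →L[ℂ] X) + Z) = 1 ∧
      (l • (1 : X →L[ℂ] X) + Z) * Φ (fun z => (l + z)⁻¹) = 1)

/-- Membership in `C₀(iℝ)`; we identify a function on `iℝ` with the function
`β ↦ f(iβ)` on `ℝ`, so `C₀(iℝ)` consists of the continuous functions `ℝ → ℂ`
vanishing at infinity. -/
def MemC0 (f : ℝ → ℂ) : Prop := Continuous f ∧ Tendsto f (cocompact ℝ) (𝓝 0)

/-- `Φ₀` is a bounded `C₀(iℝ)`-calculus for the bounded operator `Z` : a bounded algebra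
homomorphism `C₀(iℝ) → L(X)` sending each `r_λ|_{iℝ}`, `λ ∉ iℝ`, to `(λ + Z)⁻¹`. -/
def IsC0CalculusBdd (Z : X →L[ℂ] X) (Φ₀ : (ℝ → ℂ) → X →L[ℂ] X) : Prop :=
  (∀ f g, MemC0 f → MemC0 g → Φ₀ (f + g) = Φ₀ f + Φ₀ g) ∧
  (∀ (c : ℂ) (f), MemC0 f → Φ₀ (c • f) = c • Φ₀ f) ∧
  (∀ f g, MemC0 f → MemC0 g → Φ₀ (f * g) = Φ₀ f * Φ₀ g) ∧
  (∃ C : ℝ, ∀ f, MemC0 f → ‖Φ₀ f‖ ≤ C * ⨆ β : ℝ, ‖f β‖) ∧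
  (∀ l : ℂ, l.re ≠ 0 →
      Φ₀ (fun β => (l + (β : ℂ) * Complex.I)⁻¹) * (l • (1 : X →L[ℂ] X) + Z) = 1 ∧
      (l • (1 : X →L[ℂ] X) + Z) * Φ₀ (fun β => (l + (β : ℂ) * Complex.I)⁻¹) = 1)

/-- `Ψ` is a bounded `C(K)`-calculus for the bounded operator `Z` : a continuous unital
algebra homomorphism `C(K) → L(X)` mapping the identity function `ι(z) = z` to `Z`. -/
def IsCKCalculus (K : Set ℂ) (Z : X →L[ℂ] X) (Ψ : C(↥K, ℂ) → X →L[ℂ] X) : Prop :=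
  (∀ g h : C(↥K, ℂ), Ψ (g + h) = Ψ g + Ψ h) ∧
  (∀ (c : ℂ) (g : C(↥K, ℂ)), Ψ (c • g) = c • Ψ g) ∧
  (∀ g h : C(↥K, ℂ), Ψ (g * h) = Ψ g * Ψ h) ∧
  Ψ 1 = 1 ∧
  (∃ C : ℝ, ∀ g : C(↥K, ℂ), ‖Ψ g‖ ≤ C * ⨆ z : K, ‖g z‖) ∧
  Ψ ⟨fun z => (z : ℂ), continuous_subtype_val⟩ = Z

/-! Both calculi are pulled back to `C(S)`, where `S` is the circle `|w - 1/2| = 1/2`, the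
one-point compactification of `iℝ` via `z ↦ (1 + z)⁻¹`: `Ψ` by composing with this map on `K`,
and `Φ₀` through the identification of `C(S)` with the unitization of `C₀(iℝ)`. Both pullbacks
are continuous algebra homomorphisms. They agree on the coordinate `w` and on `w̄`, which
correspond to the resolvents `(1 + z)⁻¹` and `-(-1 + z)⁻¹`, because both calculi send `(l + z)⁻¹`
to the inverse of `l + Z`. By Stone–Weierstrass the pullbacks coincide, and evaluating them at
the function on `S` corresponding to `f` gives the claim. -/

open scoped ZeroAtInfty

theorem ContinuousMap.algHom_ext_of_id_of_star_id {𝕜 A : Type*} [RCLike 𝕜] [Semiring A]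
    [Algebra 𝕜 A] [TopologicalSpace A] [T2Space A] {s : Set 𝕜} [CompactSpace s]
    {φ ψ : C(s, 𝕜) →ₐ[𝕜] A} (hφ : Continuous φ) (hψ : Continuous ψ)
    (hid : φ (.restrict s (.id 𝕜)) = ψ (.restrict s (.id 𝕜)))
    (hstar : φ (star (.restrict s (.id 𝕜))) = ψ (star (.restrict s (.id 𝕜)))) : φ = ψ := by
  ext f
  induction f using ContinuousMap.induction_on_of_compact with
  | const r => exact (φ.commutes r).trans (ψ.commutes r).symm
  | id => exact hid
  | star_id => exact hstar
  | add f g hf hg => rw [map_add, map_add, hf, hg]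
  | mul f g hf hg => rw [map_mul, map_mul, hf, hg]
  | frequently f hf => exact (isClosed_eq hφ hψ).mem_of_frequently_of_tendsto hf tendsto_id

lemma add_ofReal_mul_I_ne_zero {l : ℂ} (hl : l.re ≠ 0) (β : ℝ) : l + β * I ≠ 0 := by
  intro h
  exact hl (by simpa using congrArg re h)

lemma tendsto_add_ofReal_mul_I_cobounded (l : ℂ) :
    Tendsto (fun β : ℝ => l + β * I) (cocompact ℝ) (Bornology.cobounded ℂ) := by
  rw [← Metric.cobounded_eq_cocompact]
  exact (tendsto_const_add_cobounded l).comp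
    ((tendsto_mul_right_cobounded I_ne_zero).comp (RCLike.tendsto_ofReal_cobounded_cobounded ℂ))

lemma memC0_inv_add_ofReal_mul_I {l : ℂ} (hl : l.re ≠ 0) :
    MemC0 (fun β : ℝ => (l + β * I)⁻¹) :=
  ⟨(continuous_const.add (continuous_ofReal.mul continuous_const)).inv₀
      (add_ofReal_mul_I_ne_zero hl),
    tendsto_inv₀_cobounded.comp (tendsto_add_ofReal_mul_I_cobounded l)⟩

lemma ZeroAtInftyContinuousMap.memC0 (g : C₀(ℝ, ℂ)) : MemC0 g :=
  ⟨g.continuous, g.zero_at_infty'⟩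

/-- The circle `|w - 1/2| = 1/2`, image of `iℝ ∪ {∞}` under `z ↦ (1 + z)⁻¹`. -/
def cayleyCircle : Set ℂ := {w | normSq w = w.re}

lemma isCompact_cayleyCircle : IsCompact cayleyCircle := by
  refine Metric.isCompact_of_isClosed_isBounded (isClosed_eq continuous_normSq continuous_re)
    ((Metric.isBounded_closedBall (x := 0) (r := 1)).subset ?_)
  intro w (hw : normSq w = w.re)
  rw [mem_closedBall_zero_iff]
  have h : ‖w‖ ^ 2 ≤ ‖w‖ := by
    rw [← normSq_eq_norm_sq, hw]
    exact re_le_norm w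
  nlinarith [norm_nonneg w]

instance : CompactSpace cayleyCircle := isCompact_iff_compactSpace.mp isCompact_cayleyCircle

lemma zero_mem_cayleyCircle : (0 : ℂ) ∈ cayleyCircle := by simp [cayleyCircle]

lemma inv_mem_cayleyCircle {v : ℂ} (hv : v.re = 1) : v⁻¹ ∈ cayleyCircle := by
  simp [cayleyCircle, inv_re, hv]

lemma inv_re_of_mem_cayleyCircle {w : ℂ} (hw : w ∈ cayleyCircle) (hw0 : w ≠ 0) :
    (w⁻¹).re = 1 := by
  rw [inv_re, ← show normSq w = w.re from hw]
  exact div_self (normSq_pos.mpr hw0).ne'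

def cayley (β : ℝ) : cayleyCircle := ⟨(1 + β * I)⁻¹, inv_mem_cayleyCircle (by simp)⟩

def cayleyInfty : cayleyCircle := ⟨0, zero_mem_cayleyCircle⟩

lemma continuous_cayley : Continuous cayley :=
  (memC0_inv_add_ofReal_mul_I (l := 1) (by simp)).1.subtype_mk _

lemma tendsto_cayley_cocompact : Tendsto cayley (cocompact ℝ) (𝓝 cayleyInfty) :=
  tendsto_subtype_rng.mpr (memC0_inv_add_ofReal_mul_I (l := 1) (by simp)).2

@[simp]
lemma im_inv_cayley (β : ℝ) : ((cayley β : ℂ)⁻¹).im = β := by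
  simp [cayley]

lemma star_cayley (β : ℝ) : star (cayley β : ℂ) = -1 * (-1 + β * I)⁻¹ := by
  change (starRingEnd ℂ) (1 + β * I)⁻¹ = _
  rw [map_inv₀, neg_one_mul, ← inv_neg]
  congr 1
  simp [Complex.ext_iff]

lemma tendsto_im_inv_cocompact :
    Tendsto (fun w : ℂ => (w⁻¹).im) (𝓝[cayleyCircle \ {0}] 0) (cocompact ℝ) := by
  rw [← Metric.cobounded_eq_cocompact, ← tendsto_norm_atTop_iff_cobounded]
  have h : Tendsto (fun w : ℂ => ‖w⁻¹‖ - 1) (𝓝[cayleyCircle \ {0}] 0) atTop :=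
    tendsto_atTop_add_const_right _ _ (tendsto_norm_inv_nhdsNE_zero_atTop.mono_left
      (nhdsWithin_mono _ (Set.sdiff_subset_compl _ _)))
  refine tendsto_atTop_mono' _ ?_ h
  filter_upwards [self_mem_nhdsWithin] with w ⟨hw, hw0⟩
  have hle : ‖w⁻¹‖ ≤ 1 + |(w⁻¹).im| := by
    simpa [inv_re_of_mem_cayleyCircle hw hw0] using norm_le_abs_re_add_abs_im w⁻¹
  rw [Real.norm_eq_abs]
  linarith

def MemC0.liftCayley {f : ℝ → ℂ} (hf : MemC0 f) : C(cayleyCircle, ℂ) :=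
  ⟨fun w => Function.update (fun w : ℂ => f (w⁻¹).im) 0 0 w,
    (continuousOn_update_iff.mpr
      ⟨fun _ hw => (hf.1.comp continuous_im).continuousAt.comp
          (continuousAt_inv₀ hw.2) |>.continuousWithinAt,
        fun _ => hf.2.comp tendsto_im_inv_cocompact⟩).domRestrict⟩

@[simp]
lemma MemC0.liftCayley_cayley {f : ℝ → ℂ} (hf : MemC0 f) (β : ℝ) :
    hf.liftCayley (cayley β) = f β := by
  have : (cayley β : ℂ) ≠ 0 := inv_ne_zero (add_ofReal_mul_I_ne_zero (by simp) β)
  change Function.update (fun w : ℂ => f (w⁻¹).im) 0 0 (cayley β : ℂ) = f β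
  rw [Function.update_of_ne this, im_inv_cayley]

@[simp]
lemma MemC0.liftCayley_cayleyInfty {f : ℝ → ℂ} (hf : MemC0 f) :
    hf.liftCayley cayleyInfty = 0 :=
  Function.update_self (0 : ℂ) 0 (fun w : ℂ => f (w⁻¹).im)

def cayleyC0 (g : C(cayleyCircle, ℂ)) : C₀(ℝ, ℂ) where
  toFun β := g (cayley β) - g cayleyInfty
  continuous_toFun := by have := continuous_cayley; fun_prop
  zero_at_infty' := by
    simpa using ((g.continuous.tendsto _).comp tendsto_cayley_cocompact).sub_const (g cayleyInfty)

@[simp]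
lemma cayleyC0_apply (g : C(cayleyCircle, ℂ)) (β : ℝ) :
    cayleyC0 g β = g (cayley β) - g cayleyInfty := rfl

def cayleyUnitization : C(cayleyCircle, ℂ) →ₐ[ℂ] Unitization ℂ C₀(ℝ, ℂ) where
  toFun g := Unitization.inl (g cayleyInfty) + (cayleyC0 g : Unitization ℂ C₀(ℝ, ℂ))
  map_one' := Unitization.ext (by simp) (by ext; simp)
  map_mul' g h := Unitization.ext (by simp) (by ext; simp; ring)
  map_zero' := Unitization.ext (by simp) (by ext; simp)
  map_add' g h := Unitization.ext (by simp) (by ext; simp; ring)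
  commutes' c := Unitization.ext (by simp [Unitization.algebraMap_eq_inl])
    (by ext; simp [Unitization.algebraMap_eq_inl])

def cayleyIm (K : Set ℂ) : C(K, cayleyCircle) :=
  ⟨fun z => cayley (z : ℂ).im, continuous_cayley.comp (continuous_im.comp continuous_subtype_val)⟩

namespace IsCKCalculus

variable {K : Set ℂ} {Z : X →L[ℂ] X} {Ψ : C(K, ℂ) → X →L[ℂ] X}

def toAlgHom (hΨ : IsCKCalculus K Z Ψ) : C(K, ℂ) →ₐ[ℂ] X →L[ℂ] X where
  toFun := Ψ
  map_one' := hΨ.2.2.2.1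
  map_mul' := hΨ.2.2.1
  map_zero' := by simpa using hΨ.1 0 0
  map_add' := hΨ.1
  commutes' c := by
    simpa [Algebra.algebraMap_eq_smul_one, hΨ.2.2.2.1] using hΨ.2.1 c 1

@[simp]
lemma coe_toAlgHom (hΨ : IsCKCalculus K Z Ψ) : ⇑hΨ.toAlgHom = Ψ := rfl

lemma continuous_toAlgHom [CompactSpace K] (hΨ : IsCKCalculus K Z Ψ) :
    Continuous hΨ.toAlgHom := by
  obtain ⟨C, hC⟩ := hΨ.2.2.2.2.1
  refine AddMonoidHomClass.continuous_of_bound _ |C| fun g => (hC g).trans ?_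
  have hsup : ⨆ z : K, ‖g z‖ ≤ ‖g‖ := Real.iSup_le g.norm_coe_le_norm (norm_nonneg g)
  exact mul_le_mul (le_abs_self C) hsup (Real.iSup_nonneg fun _ => norm_nonneg _) (abs_nonneg C)

lemma eq_smul_of_mul_add_eq (hΨ : IsCKCalculus K Z Ψ) {Φ₀ : (ℝ → ℂ) → X →L[ℂ] X}
    (hΦ₀ : IsC0CalculusBdd Z Φ₀) {l c : ℂ} (hl : l.re ≠ 0) {g : C(K, ℂ)}
    (hg : ∀ z, g z * (l + z) = c) : Ψ g = c • Φ₀ (fun β => (l + β * I)⁻¹) := by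
  have hΨZ : Ψ ⟨fun z => (z : ℂ), continuous_subtype_val⟩ = Z := hΨ.2.2.2.2.2
  have hleft : Ψ g * (l • 1 + Z) = c • 1 := by
    have h : g * (algebraMap ℂ _ l + ⟨fun z => (z : ℂ), continuous_subtype_val⟩) =
        algebraMap ℂ _ c := by
      ext z
      simpa using hg z
    have h' := congrArg hΨ.toAlgHom h
    rw [map_mul, map_add, AlgHom.commutes, AlgHom.commutes, coe_toAlgHom, hΨZ] at h'
    simpa [Algebra.algebraMap_eq_smul_one] using h'
  calc Ψ g = Ψ g * ((l • 1 + Z) * Φ₀ (fun β => (l + β * I)⁻¹)) := by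
        rw [(hΦ₀.2.2.2.2 l hl).2, mul_one]
    _ = c • Φ₀ (fun β => (l + β * I)⁻¹) := by rw [← mul_assoc, hleft, smul_one_mul]

def onCayleyCircle (hΨ : IsCKCalculus K Z Ψ) : C(cayleyCircle, ℂ) →ₐ[ℂ] X →L[ℂ] X :=
  hΨ.toAlgHom.comp (ContinuousMap.compRightAlgHom ℂ ℂ (cayleyIm K))

lemma onCayleyCircle_apply (hΨ : IsCKCalculus K Z Ψ) (g : C(cayleyCircle, ℂ)) :
    hΨ.onCayleyCircle g = Ψ (g.comp (cayleyIm K)) := rfl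

lemma continuous_onCayleyCircle [CompactSpace K] (hΨ : IsCKCalculus K Z Ψ) :
    Continuous hΨ.onCayleyCircle :=
  hΨ.continuous_toAlgHom.comp (ContinuousMap.compRightAlgHom_continuous ℂ ℂ _)

end IsCKCalculus

namespace IsC0CalculusBdd

variable {Z : X →L[ℂ] X} {Φ₀ : (ℝ → ℂ) → X →L[ℂ] X}

def toNonUnitalAlgHom (hΦ₀ : IsC0CalculusBdd Z Φ₀) : C₀(ℝ, ℂ) →ₙₐ[ℂ] X →L[ℂ] X where
  toFun g := Φ₀ g
  map_smul' c g := hΦ₀.2.1 c g g.memC0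
  map_zero' := by simpa using hΦ₀.1 0 0 (0 : C₀(ℝ, ℂ)).memC0 (0 : C₀(ℝ, ℂ)).memC0
  map_add' g h := hΦ₀.1 g h g.memC0 h.memC0
  map_mul' g h := hΦ₀.2.2.1 g h g.memC0 h.memC0

def onCayleyCircle (hΦ₀ : IsC0CalculusBdd Z Φ₀) : C(cayleyCircle, ℂ) →ₐ[ℂ] X →L[ℂ] X :=
  (Unitization.lift hΦ₀.toNonUnitalAlgHom).comp cayleyUnitization

lemma onCayleyCircle_apply (hΦ₀ : IsC0CalculusBdd Z Φ₀) (g : C(cayleyCircle, ℂ)) :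
    hΦ₀.onCayleyCircle g = g cayleyInfty • 1 + Φ₀ (cayleyC0 g) := by
  simp [onCayleyCircle, cayleyUnitization, toNonUnitalAlgHom, Algebra.algebraMap_eq_smul_one]

lemma continuous_onCayleyCircle (hΦ₀ : IsC0CalculusBdd Z Φ₀) :
    Continuous hΦ₀.onCayleyCircle := by
  obtain ⟨C, hC⟩ := hΦ₀.2.2.2.1
  refine AddMonoidHomClass.continuous_of_bound _ (1 + 2 * |C|) fun g => ?_
  have hsup : ⨆ β, ‖cayleyC0 g β‖ ≤ 2 * ‖g‖ := by
    refine Real.iSup_le (fun β => ?_) (by positivity)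
    rw [cayleyC0_apply, two_mul]
    exact (norm_sub_le _ _).trans (add_le_add (g.norm_coe_le_norm _) (g.norm_coe_le_norm _))
  calc ‖hΦ₀.onCayleyCircle g‖
      ≤ ‖g cayleyInfty‖ * ‖(1 : X →L[ℂ] X)‖ + C * ⨆ β, ‖cayleyC0 g β‖ := by
        rw [onCayleyCircle_apply]
        exact (norm_add_le _ _).trans (add_le_add (norm_smul_le _ (1 : X →L[ℂ] X))
          (hC _ (cayleyC0 g).memC0))
    _ ≤ ‖g‖ * 1 + |C| * (2 * ‖g‖) := by
        gcongr
        · exact g.norm_coe_le_norm _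
        · exact ContinuousLinearMap.norm_id_le
        · exact Real.iSup_nonneg fun _ => norm_nonneg _
        · exact le_abs_self C
    _ = (1 + 2 * |C|) * ‖g‖ := by ring

end IsC0CalculusBdd

lemma onCayleyCircle_eq_of_cayley_eq {K : Set ℂ} (hKi : K ⊆ {z : ℂ | z.re = 0}) {Z : X →L[ℂ] X}
    {Ψ : C(K, ℂ) → X →L[ℂ] X} (hΨ : IsCKCalculus K Z Ψ) {Φ₀ : (ℝ → ℂ) → X →L[ℂ] X}
    (hΦ₀ : IsC0CalculusBdd Z Φ₀) {l c : ℂ} (hl : l.re ≠ 0) {g : C(cayleyCircle, ℂ)}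
    (hg₀ : g cayleyInfty = 0) (hg : ∀ β, g (cayley β) = c * (l + β * I)⁻¹) :
    hΨ.onCayleyCircle g = hΦ₀.onCayleyCircle g := by
  have hgK : ∀ z, g.comp (cayleyIm K) z * (l + z) = c := by
    intro z
    have hz : ((z : ℂ).im : ℂ) * I = z := Complex.ext (by simpa using (hKi z.2).symm) (by simp)
    rw [show l + (z : ℂ) = l + (z : ℂ).im * I by rw [hz]]
    change g (cayley (z : ℂ).im) * _ = c
    rw [hg, mul_assoc, inv_mul_cancel₀ (add_ofReal_mul_I_ne_zero hl _), mul_one]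
  have hgC0 : ⇑(cayleyC0 g) = c • fun β : ℝ => (l + β * I)⁻¹ := by
    ext β
    simp [hg, hg₀]
  rw [hΨ.onCayleyCircle_apply, hΦ₀.onCayleyCircle_apply, hΨ.eq_smul_of_mul_add_eq hΦ₀ hl hgK,
    hg₀, zero_smul, zero_add, hgC0, hΦ₀.2.1 c _ (memC0_inv_add_ofReal_mul_I hl)]

theorem ck_calculus_compatible_c0_general
    (Z : X →L[ℂ] X)
    (K : Set ℂ) (hK : IsCompact K) (hKi : K ⊆ {z : ℂ | z.re = 0})
    (Ψ : C(↥K, ℂ) → X →L[ℂ] X) (hΨ : IsCKCalculus K Z Ψ)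
    (Φ₀ : (ℝ → ℂ) → X →L[ℂ] X) (hΦ₀ : IsC0CalculusBdd Z Φ₀) :
    ∀ (f : ℝ → ℂ) (hf : MemC0 f),
      Ψ ⟨fun z => f (z : ℂ).im,
          hf.1.comp (Complex.continuous_im.comp continuous_subtype_val)⟩ = Φ₀ f := by
  intro f hf
  have : CompactSpace K := isCompact_iff_compactSpace.mp hK
  have hagree : hΨ.onCayleyCircle = hΦ₀.onCayleyCircle :=
    ContinuousMap.algHom_ext_of_id_of_star_id hΨ.continuous_onCayleyCircle
      hΦ₀.continuous_onCayleyCircle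
      (onCayleyCircle_eq_of_cayley_eq hKi hΨ hΦ₀ (l := 1) (c := 1) (by simp) rfl
        fun β => (one_mul _).symm)
      (onCayleyCircle_eq_of_cayley_eq hKi hΨ hΦ₀ (l := -1) (c := -1) (by simp) (star_zero _)
        star_cayley)
  have h := DFunLike.congr_fun hagree hf.liftCayley
  rw [hΨ.onCayleyCircle_apply, hΦ₀.onCayleyCircle_apply, hf.liftCayley_cayleyInfty, zero_smul,
    zero_add] at h
  convert h using 2
  · ext z
    simp [cayleyIm]
  · ext β
    simp

/-- **Compatibility of the `C(K)`-calculus with the `C₀(iℝ)`-calculus**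
(Lemma 3.1(a)).  Functions on `iℝ` are identified with functions of `β ∈ ℝ` via
`β ↦ f(iβ)`; the restriction of `f` to `K ⊆ iℝ` is then `z ↦ f (Im z)`. -/
theorem ck_calculus_compatible_c0 [CompleteSpace X]
    (Z : X →L[ℂ] X) (hZ : IsSkewHermitianBdd Z)
    (Φ : (ℂ → ℂ) → X →L[ℂ] X) (hΦ : IsBCalculusBdd Z Φ)
    (K : Set ℂ) (hK : IsCompact K) (hKi : K ⊆ {z : ℂ | z.re = 0})
    (hspec : ∀ w ∈ spectrum ℂ Z, ∃ ε > (0:ℝ),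
      ∀ z : ℂ, z.re = 0 → ‖z - w‖ < ε → z ∈ K)
    (Ψ : C(↥K, ℂ) → X →L[ℂ] X) (hΨ : IsCKCalculus K Z Ψ)
    (Φ₀ : (ℝ → ℂ) → X →L[ℂ] X) (hΦ₀ : IsC0CalculusBdd Z Φ₀) :
    ∀ (f : ℝ → ℂ) (hf : MemC0 f),
      Ψ ⟨fun z => f (z : ℂ).im,
          hf.1.comp (Complex.continuous_im.comp continuous_subtype_val)⟩ = Φ₀ f :=
  ck_calculus_compatible_c0_general Z K hK hKi Ψ hΨ Φ₀ hΦ₀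
end
end

section
/- Let Y be a complex Banach space and let Z be a bounded operator on Y with σ(Z) ⊆ iℝ. Let K′ ⊆ ℝ be compact such that {β ∈ ℝ : iβ ∈ σ(Z)} is contained in the interior of K′. Then lim_{α→0+} ∫_{ℝ∖K′} ‖(α+iβ−Z)⁻¹ − (−α+iβ−Z)⁻¹‖ dβ = 0, where for α > 0 and β ∈ ℝ∖K′ the operators ±α+iβ−Z are invertible in L(Y) (since ±α+iβ ∉ iℝ ⊇ σ(Z) when α ≠ 0, and iβ ∉ σ(Z) for β ∉ K′). -/
/-!
By the resolvent identity, `R(α + iβ) - R(-α + iβ) = -2α R(α + iβ) R(-α + iβ)`. Both points lie in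
the closed set `{z | Im z ∈ closure (ℝ ∖ K')}`, which misses the spectrum; on such a set the
resolvent is `O(1 / (1 + ‖z‖))` (continuity on its compact parts, Neumann series at infinity).
Hence the integrand is at most `2α C² / (1 + β²)`, which is integrable, and the integral is `O(α)`.
-/

open Complex MeasureTheory Filter Topology
open scoped ENNReal NNReal Classical

noncomputable section

variable {X : Type*} [NormedAddCommGroup X] [NormedSpace ℂ X]

namespace spectrum

section Algebra

variable {𝕜 A : Type*} [Field 𝕜] [Ring A] [Algebra 𝕜 A]

theorem inverse_smul_one_sub_eq_resolvent (a : A) (r : 𝕜) :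
    Ring.inverse (r • (1 : A) - a) = resolvent a r := by
  rw [resolvent, Algebra.algebraMap_eq_smul_one]

theorem isUnit_smul_one_sub_iff_mem_resolventSet {a : A} {r : 𝕜} :
    IsUnit (r • (1 : A) - a) ↔ r ∈ resolventSet 𝕜 a := by
  rw [mem_resolventSet_iff, Algebra.algebraMap_eq_smul_one]

theorem resolvent_sub_resolvent_eq_smul_mul {a : A} {r s : 𝕜} (hr : r ∈ resolventSet 𝕜 a)
    (hs : s ∈ resolventSet 𝕜 a) :
    resolvent a r - resolvent a s = (s - r) • (resolvent a r * resolvent a s) := by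
  rw [resolvent, resolvent, Ring.inverse_sub_inverse (iff_of_true hr hs),
    sub_sub_sub_cancel_right, ← map_sub, Algebra.smul_def, ← Algebra.commutes, mul_assoc]

end Algebra

theorem exists_norm_resolvent_le_div_one_add_norm {𝕜 A : Type*} [NontriviallyNormedField 𝕜]
    [ProperSpace 𝕜] [NormedRing A] [NormedAlgebra 𝕜 A] [CompleteSpace A] {a : A} {S : Set 𝕜}
    (hS : IsClosed S) (hSρ : S ⊆ resolventSet 𝕜 a) :
    ∃ C, 0 ≤ C ∧ ∀ z ∈ S, ‖resolvent a z‖ ≤ C / (1 + ‖z‖) := by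
  obtain ⟨c, hc, hbig⟩ := (resolvent_isBigO_inv (𝕜 := 𝕜) a).exists_pos
  obtain ⟨r, -, hr⟩ := Filter.hasBasis_cobounded_norm.eventually_iff.mp hbig.bound
  set r' := max r 1
  have hcont : ContinuousOn (resolvent a) (S ∩ Metric.closedBall 0 r') := fun z hz ↦
    (hasDerivAt_resolvent_const_left (hSρ hz.1)).continuousAt.continuousWithinAt
  obtain ⟨M, hM⟩ :=
    ((isCompact_closedBall 0 r').inter_left hS).exists_bound_of_continuousOn hcont
  refine ⟨max (2 * c) (M * (1 + r')), by positivity, fun z hz ↦ ?_⟩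
  rw [le_div_iff₀ (by positivity)]
  rcases le_or_gt ‖z‖ r' with hzr | hzr
  · have hRM : ‖resolvent a z‖ ≤ M := hM z ⟨hz, mem_closedBall_zero_iff.mpr hzr⟩
    calc ‖resolvent a z‖ * (1 + ‖z‖) ≤ M * (1 + r') := by
          gcongr
          exact (norm_nonneg _).trans hRM
      _ ≤ _ := le_max_right _ _
  · have h1 : 1 < ‖z‖ := (le_max_right r 1).trans_lt hzr
    have hRz : ‖resolvent a z‖ ≤ c * ‖z‖⁻¹ := by
      simpa using hr ((le_max_left r 1).trans hzr.le)
    calc ‖resolvent a z‖ * (1 + ‖z‖) ≤ c * ‖z‖⁻¹ * (2 * ‖z‖) := by gcongr; linarith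
      _ = 2 * c := by field_simp
      _ ≤ _ := le_max_left _ _

end spectrum

theorem tendsto_integral_of_norm_le_mul {ι α E : Type*} [MeasurableSpace α] {μ : Measure α}
    [NormedAddCommGroup E] [NormedSpace ℝ E] {l : Filter ι} {c : ι → ℝ} {f : ι → α → E}
    {g : α → ℝ} (hc : Tendsto c l (𝓝 0)) (hg : Integrable g μ)
    (hf : ∀ᶠ i in l, ∀ᵐ x ∂μ, ‖f i x‖ ≤ c i * g x) :
    Tendsto (fun i ↦ ∫ x, f i x ∂μ) l (𝓝 0) := by
  refine squeeze_zero_norm' (a := fun i ↦ c i * ∫ x, g x ∂μ) ?_ ?_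
  · filter_upwards [hf] with i hi
    rw [← integral_const_mul]
    exact norm_integral_le_of_norm_le (hg.const_mul (c i)) hi
  · simpa using hc.mul_const (∫ x, g x ∂μ)

theorem setOf_im_mem_closure_compl_subset_resolventSet {A : Type*} [Ring A] [Algebra ℂ A]
    {a : A} {K : Set ℝ} (hσ : spectrum ℂ a ⊆ {z : ℂ | z.re = 0})
    (hK : {β : ℝ | (β : ℂ) * I ∈ spectrum ℂ a} ⊆ interior K) :
    {z : ℂ | z.im ∈ closure Kᶜ} ⊆ resolventSet ℂ a := by
  intro z hz
  by_contra hzσ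
  have hz_eq : (z.im : ℂ) * I = z := Complex.ext (by simpa using (hσ hzσ).symm) (by simp)
  have hzσ' : (z.im : ℂ) * I ∈ spectrum ℂ a := by rw [hz_eq]; exact hzσ
  exact (closure_compl (X := ℝ) ▸ hz) (hK hzσ')

theorem norm_resolvent_sub_resolvent_neg_re_le {A : Type*} [NormedRing A] [NormedAlgebra ℂ A]
    {a : A} {C : ℝ} (hC : 0 ≤ C) {α β : ℝ}
    (hρ : ∀ z : ℂ, z.im = β → z ∈ resolventSet ℂ a)
    (hbound : ∀ z : ℂ, z.im = β → ‖resolvent a z‖ ≤ C / (1 + ‖z‖)) :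
    ‖resolvent a ((α : ℂ) + β * I) - resolvent a (((-α : ℝ) : ℂ) + β * I)‖
      ≤ 2 * |α| * (C ^ 2 / (1 + β ^ 2)) := by
  have hβ : ∀ z : ℂ, z.im = β → ‖resolvent a z‖ ≤ C / (1 + |β|) := fun z hz ↦
    (hbound z hz).trans (by gcongr; exact hz ▸ abs_im_le_norm z)
  have hdist : ‖((-α : ℝ) : ℂ) + β * I - (α + β * I)‖ = 2 * |α| := by
    rw [add_sub_add_right_eq_sub, ← ofReal_sub, norm_real, Real.norm_eq_abs]
    rw [show -α - α = -(2 * α) by ring, abs_neg, abs_mul, abs_two]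
  rw [spectrum.resolvent_sub_resolvent_eq_smul_mul (hρ _ (by simp)) (hρ _ (by simp)),
    norm_smul, hdist]
  gcongr
  calc ‖resolvent a (α + β * I) * resolvent a (((-α : ℝ) : ℂ) + β * I)‖
      ≤ C / (1 + |β|) * (C / (1 + |β|)) :=
        (norm_mul_le _ _).trans (mul_le_mul (hβ _ (by simp)) (hβ _ (by simp))
          (norm_nonneg _) (by positivity))
    _ = C ^ 2 / (1 + |β|) ^ 2 := by rw [div_mul_div_comm, sq, sq]
    _ ≤ C ^ 2 / (1 + β ^ 2) := by
        gcongr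
        nlinarith [abs_nonneg β, sq_abs β]

/-- **The resolvent-difference integral away from the spectrum tends to `0`**
(the limit (3.1) in the proof of Lemma 3.1). -/
theorem resolvent_difference_integral_tendsto_zero [CompleteSpace X]
    (Z : X →L[ℂ] X) (hσ : spectrum ℂ Z ⊆ {z : ℂ | z.re = 0})
    (K' : Set ℝ) (hK' : IsCompact K')
    (hsub : {β : ℝ | (β : ℂ) * Complex.I ∈ spectrum ℂ Z} ⊆ interior K') :
    (∀ α : ℝ, 0 < α → ∀ β : ℝ, β ∉ K' →
      IsUnit ((((α : ℂ) + (β : ℂ) * Complex.I) • (1 : X →L[ℂ] X)) - Z) ∧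
      IsUnit ((((-α : ℝ) + (β : ℂ) * Complex.I) • (1 : X →L[ℂ] X)) - Z)) ∧
    Tendsto (fun α : ℝ => ∫ β in K'ᶜ,
        ‖Ring.inverse ((((α : ℂ) + (β : ℂ) * Complex.I) • (1 : X →L[ℂ] X)) - Z)
          - Ring.inverse ((((-α : ℝ) + (β : ℂ) * Complex.I) • (1 : X →L[ℂ] X)) - Z)‖)
      (𝓝[>] (0:ℝ)) (𝓝 0) := by
  set S := {z : ℂ | z.im ∈ closure K'ᶜ}
  have hSρ : S ⊆ resolventSet ℂ Z := setOf_im_mem_closure_compl_subset_resolventSet hσ hsub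
  have hS : ∀ β ∉ K', ∀ z : ℂ, z.im = β → z ∈ S := fun β hβ z hz ↦
    show z.im ∈ closure K'ᶜ from hz ▸ subset_closure hβ
  have hρ : ∀ β ∉ K', ∀ z : ℂ, z.im = β → z ∈ resolventSet ℂ Z := fun β hβ z hz ↦
    hSρ (hS β hβ z hz)
  simp only [spectrum.isUnit_smul_one_sub_iff_mem_resolventSet,
    spectrum.inverse_smul_one_sub_eq_resolvent]
  refine ⟨fun α _ β hβ ↦ ⟨hρ β hβ _ (by simp), hρ β hβ _ (by simp)⟩, ?_⟩
  obtain ⟨C, hC, hbound⟩ := spectrum.exists_norm_resolvent_le_div_one_add_norm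
    (isClosed_closure.preimage continuous_im) hSρ
  refine tendsto_integral_of_norm_le_mul (c := fun α ↦ 2 * α)
    (((continuous_const_mul 2).tendsto' 0 0 (mul_zero 2)).mono_left nhdsWithin_le_nhds)
    ((integrable_inv_one_add_sq.const_mul (C ^ 2)).restrict (s := K'ᶜ)) ?_
  filter_upwards [self_mem_nhdsWithin] with α hα
  refine (ae_restrict_iff' hK'.isClosed.measurableSet.compl).mpr (.of_forall fun β hβ ↦ ?_)
  rw [norm_norm]
  refine (norm_resolvent_sub_resolvent_neg_re_le hC (hρ β hβ) fun z hz ↦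
    hbound z (hS β hβ z hz)).trans_eq ?_
  rw [abs_of_pos (Set.mem_Ioi.mp hα)]
  ring
end
end
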